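/- arXiv:2505.02115 — 2 statements merged into one kernel-verified Lean document; each statement's English description precedes it below -/
import Mathlib

section
/- (Lemma 2(iv): dual strong convexity under Assumption B.) Assume f1: ℝ^{dx} → ℝ is μx-strongly convex and Lx-smooth (Lx ≥ μx > 0), f2 = 0, and g1(y) = g3(y) + (1/2) yᵀPy + bᵀy where g3 is convex and differentiable and P is symmetric positive semidefinite with BBᵀ + Lx·P positive definite. For y ∈ ℝ^{dy}, let x*(y) denote the unique minimizer over x of f1(x) + ⟨Bᵀy, x⟩, and define G(y) = ∇g3(y) + Py + b − B x*(y). Then ⟨G(y) − G(y'), y − y'⟩ ≥ (λmin(BBᵀ + Lx·P)/Lx)‖y − y'‖² for all y, y' ∈ ℝ^{dy} (i.e., the dual function φ is (λmin(BBᵀ + Lx·P)/Lx)-strongly convex). -/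
/-! The dual gradient `G(y) = ∇g₃(y) + P y + b - B x*(y)` splits into three monotone
parts. `∇g₃` is monotone because `g₃` is convex. The optimality condition
`∇f₁(x*(y)) = -Bᵀ y` turns cocoercivity of `∇f₁` into
`⟪B (x*(y') - x*(y)), y - y'⟫ ≥ ‖Bᵀ (y - y')‖² / Lx`. Adding `⟪P (y - y'), y - y'⟫` yields the
quadratic form of `(B Bᵀ + Lx P) / Lx` at `y - y'`, which is at least its smallest Rayleigh
quotient times `‖y - y'‖²`. -/

open scoped RealInnerProductSpace
open Matrix

/-- Action of a matrix on Euclidean space. -/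
noncomputable def mulE {m n : ℕ} (B : Matrix (Fin m) (Fin n) ℝ)
    (x : EuclideanSpace ℝ (Fin n)) : EuclideanSpace ℝ (Fin m) :=
  Matrix.toEuclideanLin B x

/-- Largest singular value (operator norm) of a matrix. -/
noncomputable def sigmaMax {m n : ℕ} (B : Matrix (Fin m) (Fin n) ℝ) : ℝ :=
  ‖LinearMap.toContinuousLinearMap (Matrix.toEuclideanLin B)‖

/-- Largest eigenvalue of a symmetric matrix (Rayleigh quotient formulation). -/
noncomputable def lambdaMax {n : ℕ} (P : Matrix (Fin n) (Fin n) ℝ) : ℝ :=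
  ⨆ v : Metric.sphere (0 : EuclideanSpace ℝ (Fin n)) 1,
    ⟪mulE P (v : EuclideanSpace ℝ (Fin n)), (v : EuclideanSpace ℝ (Fin n))⟫

/-- Smallest eigenvalue of a symmetric matrix (Rayleigh quotient formulation). -/
noncomputable def lambdaMin {n : ℕ} (P : Matrix (Fin n) (Fin n) ℝ) : ℝ :=
  ⨅ v : Metric.sphere (0 : EuclideanSpace ℝ (Fin n)) 1,
    ⟪mulE P (v : EuclideanSpace ℝ (Fin n)), (v : EuclideanSpace ℝ (Fin n))⟫

/-- `f` is `μ`-strongly convex: `f - μ/2 ‖·‖²` is convex. -/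
def StrongConvex {n : ℕ} (μ : ℝ) (f : EuclideanSpace ℝ (Fin n) → ℝ) : Prop :=
  ConvexOn ℝ Set.univ fun x => f x - μ / 2 * ‖x‖ ^ 2

/-- A function with values in `ℝ ∪ {+∞}` (modelled by `EReal`) is proper. -/
def ProperER {n : ℕ} (f : EuclideanSpace ℝ (Fin n) → EReal) : Prop :=
  (∀ x, f x ≠ ⊥) ∧ ∃ x, f x ≠ ⊤

/-- Convexity for `EReal`-valued functions. -/
def ConvexER {n : ℕ} (f : EuclideanSpace ℝ (Fin n) → EReal) : Prop :=
  ∀ x y : EuclideanSpace ℝ (Fin n), ∀ a b : ℝ, 0 ≤ a → 0 ≤ b → a + b = 1 →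
    f (a • x + b • y) ≤ (a : EReal) * f x + (b : EReal) * f y

/-- `s` is a subgradient of the `EReal`-valued convex function `f` at `x`. -/
def IsSubgradAt {n : ℕ} (f : EuclideanSpace ℝ (Fin n) → EReal)
    (x s : EuclideanSpace ℝ (Fin n)) : Prop :=
  ∀ z, f x + ((⟪s, z - x⟫ : ℝ) : EReal) ≤ f z

/-- `p` is the proximal point `prox_{t g}(w)`, i.e. it minimizes `g(·) + 1/(2t)‖· - w‖²`. -/
def IsProx {n : ℕ} (g : EuclideanSpace ℝ (Fin n) → EReal) (t : ℝ)
    (w p : EuclideanSpace ℝ (Fin n)) : Prop :=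
  ∀ z, g p + ((1 / (2 * t) * ‖p - w‖ ^ 2 : ℝ) : EReal)
      ≤ g z + ((1 / (2 * t) * ‖z - w‖ ^ 2 : ℝ) : EReal)

open Set

section Gradient

variable {E : Type*} [NormedAddCommGroup E] [InnerProductSpace ℝ E] [CompleteSpace E]
  {f : E → ℝ} {f' : E → E} {L : ℝ}

lemma HasGradientAt.hasDerivAt_comp_add_smul {g x d : E} {t : ℝ}
    (hf : HasGradientAt f g (x + t • d)) :
    HasDerivAt (fun s : ℝ => f (x + s • d)) ⟪g, d⟫ t := by
  have hline : HasDerivAt (fun s : ℝ => x + s • d) d t := by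
    simpa using ((hasDerivAt_id t).smul_const d).const_add x
  have h := hf.hasFDerivAt.comp_hasDerivAt t hline
  simp only [InnerProductSpace.toDual_apply_apply] at h
  exact h

lemma ConvexOn.add_inner_le_of_hasGradientAt (hconv : ConvexOn ℝ univ f) {g x : E}
    (hf : HasGradientAt f g x) (z : E) : f x + ⟪g, z - x⟫ ≤ f z := by
  have hline : ConvexOn ℝ univ fun s : ℝ => f (x + s • (z - x)) := by
    have hcomp : f ∘ AffineMap.lineMap x z = fun s : ℝ => f (x + s • (z - x)) := by
      ext s
      simp [AffineMap.lineMap_apply_module', add_comm]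
    simpa [hcomp] using hconv.comp_affineMap (AffineMap.lineMap x z)
  have hderiv : HasDerivAt (fun s : ℝ => f (x + s • (z - x))) ⟪g, z - x⟫ 0 :=
    HasGradientAt.hasDerivAt_comp_add_smul (by simpa using hf)
  have := hline.le_slope_of_hasDerivAt (mem_univ 0) (mem_univ 1) zero_lt_one hderiv
  simp only [slope, sub_zero, inv_one, one_smul, add_sub_cancel, zero_smul, add_zero, vsub_eq_sub,
    smul_eq_mul, one_mul] at this
  linarith

lemma ConvexOn.inner_sub_gradient_nonneg (hconv : ConvexOn ℝ univ f)
    (hf : ∀ x, HasGradientAt f (f' x) x) (a b : E) : 0 ≤ ⟪f' a - f' b, a - b⟫ := by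
  have hab := hconv.add_inner_le_of_hasGradientAt (hf a) b
  have hba := hconv.add_inner_le_of_hasGradientAt (hf b) a
  rw [← neg_sub, inner_neg_right] at hab
  rw [inner_sub_left]
  linarith

lemma le_add_inner_add_sq_of_lipschitz_gradient (hf : ∀ x, HasGradientAt f (f' x) x)
    (hlip : ∀ x x', ‖f' x - f' x'‖ ≤ L * ‖x - x'‖) (x d : E) :
    f (x + d) ≤ f x + ⟪f' x, d⟫ + L / 2 * ‖d‖ ^ 2 := by
  set φ : ℝ → ℝ := fun t => f (x + t • d) - t * ⟪f' x, d⟫ - L / 2 * t ^ 2 * ‖d‖ ^ 2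
  have hφ : ∀ t, HasDerivAt φ (⟪f' (x + t • d) - f' x, d⟫ - L * t * ‖d‖ ^ 2) t := by
    intro t
    have h := (((hf (x + t • d)).hasDerivAt_comp_add_smul).sub
      ((hasDerivAt_id t).mul_const ⟪f' x, d⟫)).sub
      (((hasDerivAt_pow 2 t).const_mul (L / 2)).mul_const (‖d‖ ^ 2))
    refine h.congr_deriv ?_
    rw [inner_sub_left]
    ring
  have hφ_nonpos : ∀ t ∈ interior (Icc (0 : ℝ) 1),
      ⟪f' (x + t • d) - f' x, d⟫ - L * t * ‖d‖ ^ 2 ≤ 0 := by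
    intro t ht
    rw [interior_Icc] at ht
    have hgrad : ‖f' (x + t • d) - f' x‖ ≤ L * (t * ‖d‖) := by
      simpa [norm_smul, abs_of_pos ht.1] using hlip (x + t • d) x
    have := real_inner_le_norm (f' (x + t • d) - f' x) d
    nlinarith [norm_nonneg d]
  have hanti : AntitoneOn φ (Icc 0 1) :=
    antitoneOn_of_hasDerivWithinAt_nonpos (convex_Icc 0 1)
      (fun t _ => (hφ t).continuousAt.continuousWithinAt)
      (fun t _ => (hφ t).hasDerivWithinAt) hφ_nonpos
  have := hanti (left_mem_Icc.2 zero_le_one) (right_mem_Icc.2 zero_le_one) zero_le_one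
  simp only [one_smul, one_mul, one_pow, mul_one, zero_smul, add_zero, zero_mul, sub_zero, ne_eq,
    OfNat.ofNat_ne_zero, not_false_eq_true, zero_pow, mul_zero, tsub_le_iff_right, φ] at this
  linarith

lemma ConvexOn.add_inner_add_sq_norm_sub_le (hL : 0 < L) (hconv : ConvexOn ℝ univ f)
    (hf : ∀ x, HasGradientAt f (f' x) x) (hlip : ∀ x x', ‖f' x - f' x'‖ ≤ L * ‖x - x'‖)
    (a b : E) : f b + ⟪f' b, a - b⟫ + 1 / (2 * L) * ‖f' a - f' b‖ ^ 2 ≤ f a := by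
  set u := f' a - f' b
  -- Evaluate `f` at `a - u / L`: bounded above by the descent lemma at `a`,
  -- below by the supporting hyperplane at `b`.
  have hdescent := le_add_inner_add_sq_of_lipschitz_gradient hf hlip a (-(1 / L) • u)
  have hsupport := hconv.add_inner_le_of_hasGradientAt (hf b) (a + -(1 / L) • u)
  rw [show a + -(1 / L) • u - b = (a - b) + -(1 / L) • u by abel, inner_add_right,
    real_inner_smul_right] at hsupport
  rw [real_inner_smul_right, norm_smul, mul_pow, Real.norm_eq_abs, sq_abs] at hdescent
  have hu : ⟪f' a, u⟫ - ⟪f' b, u⟫ = ‖u‖ ^ 2 := by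
    rw [← inner_sub_left, real_inner_self_eq_norm_sq]
  have hcoef : L / 2 * ((-(1 / L)) ^ 2 * ‖u‖ ^ 2) = 1 / (2 * L) * ‖u‖ ^ 2 := by
    field_simp
  linear_combination hsupport + hdescent - (1 / L) * hu + hcoef

lemma ConvexOn.sq_norm_sub_div_le_inner (hL : 0 < L) (hconv : ConvexOn ℝ univ f)
    (hf : ∀ x, HasGradientAt f (f' x) x) (hlip : ∀ x x', ‖f' x - f' x'‖ ≤ L * ‖x - x'‖)
    (a b : E) : ‖f' a - f' b‖ ^ 2 / L ≤ ⟪f' a - f' b, a - b⟫ := by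
  have hab := hconv.add_inner_add_sq_norm_sub_le hL hf hlip a b
  have hba := hconv.add_inner_add_sq_norm_sub_le hL hf hlip b a
  rw [norm_sub_rev, ← neg_sub a b, inner_neg_right] at hba
  rw [inner_sub_left]
  have : ‖f' a - f' b‖ ^ 2 / L = 1 / (2 * L) * ‖f' a - f' b‖ ^ 2 * 2 := by field_simp
  linarith

lemma eq_neg_of_isMinOn_add_inner {g a c : E} (hf : HasGradientAt f g a)
    (hmin : ∀ x, f a + ⟪c, a⟫ ≤ f x + ⟪c, x⟫) : g = -c := by
  have hzero := IsLocalMin.hasFDerivAt_eq_zero (Filter.Eventually.of_forall hmin)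
    (hf.hasFDerivAt.add (innerSL ℝ c).hasFDerivAt)
  have := congrArg (fun φ => φ (g + c)) hzero
  simp only [_root_.add_apply, InnerProductSpace.toDual_apply_apply, innerSL_apply_apply,
    _root_.zero_apply, ← inner_add_left, inner_self_eq_zero] at this
  exact eq_neg_of_add_eq_zero_left this

end Gradient

section Matrix

variable {m n : ℕ}

lemma mulE_sub (A : Matrix (Fin m) (Fin n) ℝ) (x y : EuclideanSpace ℝ (Fin n)) :
    mulE A (x - y) = mulE A x - mulE A y :=
  map_sub _ x y

lemma mulE_smul (A : Matrix (Fin m) (Fin n) ℝ) (c : ℝ) (x : EuclideanSpace ℝ (Fin n)) :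
    mulE A (c • x) = c • mulE A x :=
  map_smul _ c x

lemma inner_mulE_left (A : Matrix (Fin m) (Fin n) ℝ) (x : EuclideanSpace ℝ (Fin n))
    (y : EuclideanSpace ℝ (Fin m)) : ⟪mulE A x, y⟫ = ⟪x, mulE Aᵀ y⟫ := by
  rw [mulE, mulE, ← Matrix.conjTranspose_eq_transpose_of_trivial,
    Matrix.toEuclideanLin_conjTranspose_eq_adjoint, LinearMap.adjoint_inner_right]

lemma inner_mulE_mul_transpose_add_smul (A : Matrix (Fin m) (Fin n) ℝ)
    (P : Matrix (Fin m) (Fin m) ℝ) (c : ℝ) (y : EuclideanSpace ℝ (Fin m)) :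
    ⟪mulE (A * Aᵀ + c • P) y, y⟫ = ‖mulE Aᵀ y‖ ^ 2 + c * ⟪mulE P y, y⟫ := by
  have hmul : mulE (A * Aᵀ) y = mulE A (mulE Aᵀ y) := by
    simp [mulE, Matrix.toLpLin_apply, Matrix.mulVec_mulVec]
  have hadd : mulE (A * Aᵀ + c • P) y = mulE (A * Aᵀ) y + c • mulE P y := by
    simp [mulE, map_add, map_smul]
  rw [hadd, inner_add_left, hmul, inner_mulE_left, real_inner_self_eq_norm_sq,
    real_inner_smul_left]

lemma bddBelow_inner_mulE_sphere (M : Matrix (Fin n) (Fin n) ℝ) :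
    BddBelow (range fun v : Metric.sphere (0 : EuclideanSpace ℝ (Fin n)) 1 =>
      ⟪mulE M (v : EuclideanSpace ℝ (Fin n)), (v : EuclideanSpace ℝ (Fin n))⟫) := by
  have hcont : Continuous fun v : EuclideanSpace ℝ (Fin n) => ⟪mulE M v, v⟫ :=
    (LinearMap.continuous_of_finiteDimensional (Matrix.toEuclideanLin M)).inner continuous_id
  have h := (isCompact_sphere (0 : EuclideanSpace ℝ (Fin n)) 1).bddBelow_image hcont.continuousOn
  rwa [image_eq_range] at h

lemma lambdaMin_mul_sq_norm_le (M : Matrix (Fin n) (Fin n) ℝ) (y : EuclideanSpace ℝ (Fin n)) :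
    lambdaMin M * ‖y‖ ^ 2 ≤ ⟪mulE M y, y⟫ := by
  rcases eq_or_ne y 0 with rfl | hy
  · simp [mulE]
  have hnorm : 0 < ‖y‖ := norm_pos_iff.2 hy
  have hunit : ‖y‖⁻¹ • y ∈ Metric.sphere (0 : EuclideanSpace ℝ (Fin n)) 1 := by
    simp [norm_smul, hnorm.ne']
  have hle : lambdaMin M ≤ ⟪mulE M (‖y‖⁻¹ • y), ‖y‖⁻¹ • y⟫ :=
    ciInf_le (bddBelow_inner_mulE_sphere M) ⟨_, hunit⟩
  rw [mulE_smul, real_inner_smul_left, real_inner_smul_right, ← mul_assoc, ← sq, inv_pow,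
    le_inv_mul_iff₀ (by positivity), mul_comm] at hle
  exact hle

end Matrix

lemma sq_norm_mulE_transpose_div_le_inner_minimizer {dx dy : ℕ} {L : ℝ} (hL : 0 < L)
    {f : EuclideanSpace ℝ (Fin dx) → ℝ}
    {f' : EuclideanSpace ℝ (Fin dx) → EuclideanSpace ℝ (Fin dx)}
    (hf : ∀ x, HasGradientAt f (f' x) x) (hconv : ConvexOn ℝ univ f)
    (hlip : ∀ x x', ‖f' x - f' x'‖ ≤ L * ‖x - x'‖) (B : Matrix (Fin dy) (Fin dx) ℝ)
    {xstar : EuclideanSpace ℝ (Fin dy) → EuclideanSpace ℝ (Fin dx)}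
    (hxstar : ∀ y x, f (xstar y) + ⟪mulE Bᵀ y, xstar y⟫ ≤ f x + ⟪mulE Bᵀ y, x⟫)
    (y y' : EuclideanSpace ℝ (Fin dy)) :
    ‖mulE Bᵀ (y - y')‖ ^ 2 / L ≤ ⟪mulE B (xstar y' - xstar y), y - y'⟫ := by
  have hgrad : ∀ z, f' (xstar z) = -mulE Bᵀ z := fun z =>
    eq_neg_of_isMinOn_add_inner (hf (xstar z)) (hxstar z)
  have hcoco := hconv.sq_norm_sub_div_le_inner hL hf hlip (xstar y') (xstar y)
  rwa [hgrad, hgrad, neg_sub_neg, ← mulE_sub, real_inner_comm, ← inner_mulE_left] at hcoco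

theorem dual_strongly_monotone_assumption_B_general {dx dy : ℕ} (μx Lx : ℝ)
    (hμx : 0 < μx) (hLx : μx ≤ Lx)
    (f1 : EuclideanSpace ℝ (Fin dx) → ℝ)
    (f1' : EuclideanSpace ℝ (Fin dx) → EuclideanSpace ℝ (Fin dx))
    (hf1grad : ∀ x, HasGradientAt f1 (f1' x) x)
    (hf1sc : StrongConvex μx f1)
    (hf1sm : ∀ x x', ‖f1' x - f1' x'‖ ≤ Lx * ‖x - x'‖)
    (g3 : EuclideanSpace ℝ (Fin dy) → ℝ)
    (g3' : EuclideanSpace ℝ (Fin dy) → EuclideanSpace ℝ (Fin dy))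
    (hg3grad : ∀ y, HasGradientAt g3 (g3' y) y)
    (hg3conv : ConvexOn ℝ Set.univ g3)
    (b : EuclideanSpace ℝ (Fin dy))
    (B : Matrix (Fin dy) (Fin dx) ℝ)
    (P : Matrix (Fin dy) (Fin dy) ℝ)
    (xstar : EuclideanSpace ℝ (Fin dy) → EuclideanSpace ℝ (Fin dx))
    (hxstar : ∀ y x, f1 (xstar y) + ⟪mulE Bᵀ y, xstar y⟫ ≤ f1 x + ⟪mulE Bᵀ y, x⟫) :
    ∀ y y' : EuclideanSpace ℝ (Fin dy),
      (lambdaMin (B * Bᵀ + Lx • P) / Lx) * ‖y - y'‖ ^ 2 ≤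
        ⟪(g3' y + mulE P y + b - mulE B (xstar y)) -
          (g3' y' + mulE P y' + b - mulE B (xstar y')), y - y'⟫ := by
  intro y y'
  have hLx0 : 0 < Lx := hμx.trans_le hLx
  have hf1conv : ConvexOn ℝ univ f1 :=
    strongConvexOn_zero.1 ((strongConvexOn_iff_convex.2 hf1sc).mono hμx.le)
  have hg3mono := hg3conv.inner_sub_gradient_nonneg hg3grad y y'
  have hdual := sq_norm_mulE_transpose_div_le_inner_minimizer hLx0 hf1grad hf1conv hf1sm B
    hxstar y y'
  have hquad := lambdaMin_mul_sq_norm_le (B * Bᵀ + Lx • P) (y - y')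
  rw [inner_mulE_mul_transpose_add_smul] at hquad
  have hsplit : (g3' y + mulE P y + b - mulE B (xstar y)) -
      (g3' y' + mulE P y' + b - mulE B (xstar y'))
      = (g3' y - g3' y') + mulE P (y - y') + mulE B (xstar y' - xstar y) := by
    rw [mulE_sub, mulE_sub]
    abel
  have hscaled : lambdaMin (B * Bᵀ + Lx • P) / Lx * ‖y - y'‖ ^ 2
      ≤ ‖mulE Bᵀ (y - y')‖ ^ 2 / Lx + ⟪mulE P (y - y'), y - y'⟫ := by
    rw [div_mul_eq_mul_div, div_add' _ _ _ hLx0.ne']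
    gcongr
    linarith
  rw [hsplit, inner_add_left, inner_add_left]
  linarith

/-- Lemma 2(iv): dual strong convexity under Assumption B. -/
theorem dual_strongly_monotone_assumption_B {dx dy : ℕ} (μx Lx : ℝ)
    (hμx : 0 < μx) (hLx : μx ≤ Lx)
    (f1 : EuclideanSpace ℝ (Fin dx) → ℝ)
    (f1' : EuclideanSpace ℝ (Fin dx) → EuclideanSpace ℝ (Fin dx))
    (hf1grad : ∀ x, HasGradientAt f1 (f1' x) x)
    (hf1sc : StrongConvex μx f1)
    (hf1sm : ∀ x x', ‖f1' x - f1' x'‖ ≤ Lx * ‖x - x'‖)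
    (g3 : EuclideanSpace ℝ (Fin dy) → ℝ)
    (g3' : EuclideanSpace ℝ (Fin dy) → EuclideanSpace ℝ (Fin dy))
    (hg3grad : ∀ y, HasGradientAt g3 (g3' y) y)
    (hg3conv : ConvexOn ℝ Set.univ g3)
    (b : EuclideanSpace ℝ (Fin dy))
    (B : Matrix (Fin dy) (Fin dx) ℝ)
    (P : Matrix (Fin dy) (Fin dy) ℝ) (hP : P.PosSemidef)
    (hBP : (B * Bᵀ + Lx • P).PosDef)
    (xstar : EuclideanSpace ℝ (Fin dy) → EuclideanSpace ℝ (Fin dx))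
    (hxstar : ∀ y x, f1 (xstar y) + ⟪mulE Bᵀ y, xstar y⟫ ≤ f1 x + ⟪mulE Bᵀ y, x⟫) :
    ∀ y y' : EuclideanSpace ℝ (Fin dy),
      (lambdaMin (B * Bᵀ + Lx • P) / Lx) * ‖y - y'‖ ^ 2 ≤
        ⟪(g3' y + mulE P y + b - mulE B (xstar y)) -
          (g3' y' + mulE P y' + b - mulE B (xstar y')), y - y'⟫ :=
  dual_strongly_monotone_assumption_B_general μx Lx hμx hLx f1 f1' hf1grad hf1sc hf1sm g3 g3'
    hg3grad hg3conv b B P xstar hxstar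
end

section
/- (Quantitative geometric decay in the proof of Theorem 3.) Assume Assumption A' holds, φ is μφ-strongly convex with μφ > 0, κφ = (σmax(B)²/μx + Ly)/μφ, ρ = 1 − 1/√κφ, and θ = 1 − 1/(c√κφ) for some constant c > 1 (so θ > ρ). Let ε²_{k+1} = θ·ε²_k with ε₁ = (√θ − √ρ)·√(μφ(Φ(y^0) − Φ(y^*)) ), and suppose the iterates satisfy ‖x^{k+1} − x*(z^k)‖² ≤ ε²_{k+1}/σmax(B)², z^k = y^k + ((√κφ−1)/(√κφ+1))(y^k − y^{k−1}) for k ≥ 1, and the inexact-APG bound Φ(y^k) − Φ(y*) ≤ ρ^k(√(2(Φ(y^0) − Φ(y*))) + √(2/μφ)·Σ_{i=1}^{k} ρ^{−i/2}ε_i)². Then for all k ≥ 1: ‖x*(z^k) − x*‖² < C₂·ε₁²·θ^k and ‖x^{k+1} − x*‖² < C₃·ε₁²·θ^k, where C₁ = (2σmax(B)²/(μx²μφ))·( √κφ(2 + √ρ)/(√κφ + 1) )², C₂ = 8C₁/( μφ(√θ − √ρ)² ), and C₃ = 2(C₂ + 1/σmax(B)²). -/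
/-!
Write `a = √ρ`, `b = √θ` and `D₀ = Φ(y⁰) - Φ(y*)`. Since `|εᵢ| = b^(i-1) ε₁` and
`ε₁ = (b - a) √(μφ D₀)`, the error sum in the inexact-APG bound telescopes:
`(b - a) ∑_{i ≤ k} a^(k-i) b^(i-1) = b^k - a^k`, so `Φ(y^k) - Φ(y*) ≤ 2 D₀ θ^k` and, by strong
convexity of `φ`, `‖y^k - y*‖ ≤ √(4 D₀ / μφ) b^k`. The extrapolated point `z^k` keeps the rate `b^k`
because `√κφ · a² = √κφ - 1`, and `x*(·)` is `σmax(B)/μx`-Lipschitz since the argmin of a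
`μx`-strongly convex problem is strongly monotone in the linear term. This gives
`‖x*(z^k) - x*‖² ≤ C₂ ε₁² θ^k / 4`, and the slack factor `4` makes both bounds strict.
-/

open scoped RealInnerProductSpace
open Matrix

open Finset Filter Topology

section Minimizers

variable {n : ℕ} {μ : ℝ} {f : EuclideanSpace ℝ (Fin n) → ℝ} {g : EuclideanSpace ℝ (Fin n) → EReal}

lemma ProperER.exists_eq_coe (hg : ProperER g) {x : EuclideanSpace ℝ (Fin n)} (hx : g x ≠ ⊤) :
    ∃ b : ℝ, g x = b :=
  ⟨(g x).toReal, (EReal.coe_toReal hx (hg.1 x)).symm⟩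

lemma ProperER.ne_top_of_isMin (hg : ProperER g) {u : EuclideanSpace ℝ (Fin n)}
    (hmin : ∀ w, (f u : EReal) + g u ≤ f w + g w) : g u ≠ ⊤ := by
  intro hu
  obtain ⟨w, hw⟩ := hg.2
  obtain ⟨b, hb⟩ := hg.exists_eq_coe hw
  have := hmin w
  rw [hu, EReal.coe_add_top, hb, ← EReal.coe_add, top_le_iff] at this
  exact EReal.coe_ne_top _ this

lemma StrongConvex.add_inner (hf : StrongConvex μ f) (s : EuclideanSpace ℝ (Fin n)) :
    StrongConvex μ fun x ↦ f x + ⟪s, x⟫ := by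
  have hs : ConvexOn ℝ Set.univ fun x : EuclideanSpace ℝ (Fin n) ↦ ⟪s, x⟫ :=
    (innerₛₗ ℝ s).convexOn convex_univ
  refine (hf.add hs).congr fun x _ ↦ ?_
  simp only [Pi.add_apply]
  ring

lemma StrongConvex.add_half_mul_norm_sub_sq_le (hf : StrongConvex μ f) (hg : ConvexER g)
    {u v : EuclideanSpace ℝ (Fin n)} {bu bv : ℝ} (hgu : g u = bu) (hgv : g v = bv)
    (hmin : ∀ w, (f u : EReal) + g u ≤ f w + g w) :
    f u + bu + μ / 2 * ‖v - u‖ ^ 2 ≤ f v + bv := by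
  have hsc := (strongConvexOn_iff_convex.2 hf).2 (Set.mem_univ v) (Set.mem_univ u)
  -- compare `u` with `t • v + (1 - t) • u`, then let `t → 0⁺`
  have key : ∀ t ∈ Set.Ioo (0 : ℝ) 1, f u + bu + μ / 2 * ‖v - u‖ ^ 2 * (1 - t) ≤ f v + bv := by
    rintro t ⟨ht0, ht1⟩
    have hgw : g (t • v + (1 - t) • u) ≤ ((t * bv + (1 - t) * bu : ℝ) : EReal) := by
      simpa [hgu, hgv] using hg v u t (1 - t) ht0.le (by linarith) (by ring)
    have hmin' : f u + bu ≤ f (t • v + (1 - t) • u) + (t * bv + (1 - t) * bu) := by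
      have := (hmin _).trans (add_le_add le_rfl hgw)
      rw [hgu] at this
      exact_mod_cast this
    have hfw := hsc (a := t) (b := 1 - t) ht0.le (by linarith) (by ring)
    simp only [smul_eq_mul] at hfw
    refine (mul_le_mul_iff_right₀ ht0).mp ?_
    linarith
  have hlim : Tendsto (fun t : ℝ ↦ f u + bu + μ / 2 * ‖v - u‖ ^ 2 * (1 - t)) (𝓝[>] 0)
      (𝓝 (f u + bu + μ / 2 * ‖v - u‖ ^ 2)) :=
    ((by fun_prop : Continuous fun t : ℝ ↦ f u + bu + μ / 2 * ‖v - u‖ ^ 2 * (1 - t)).tendsto'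
      0 _ (by simp)).mono_left nhdsWithin_le_nhds
  exact le_of_tendsto hlim (eventually_of_mem (Ioo_mem_nhdsGT one_pos) key)

lemma StrongConvex.mul_norm_sub_sq_le_inner_of_isMin (hf : StrongConvex μ f) (hgp : ProperER g)
    (hg : ConvexER g) {s s' u v : EuclideanSpace ℝ (Fin n)}
    (hu : ∀ w, ((f u + ⟪s, u⟫ : ℝ) : EReal) + g u ≤ ((f w + ⟪s, w⟫ : ℝ) : EReal) + g w)
    (hv : ∀ w, ((f v + ⟪s', v⟫ : ℝ) : EReal) + g v ≤ ((f w + ⟪s', w⟫ : ℝ) : EReal) + g w) :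
    μ * ‖u - v‖ ^ 2 ≤ ⟪s' - s, u - v⟫ := by
  obtain ⟨bu, hbu⟩ := hgp.exists_eq_coe (hgp.ne_top_of_isMin (f := fun x ↦ f x + ⟪s, x⟫) hu)
  obtain ⟨bv, hbv⟩ := hgp.exists_eq_coe (hgp.ne_top_of_isMin (f := fun x ↦ f x + ⟪s', x⟫) hv)
  have hgrowth_u := (hf.add_inner s).add_half_mul_norm_sub_sq_le hg hbu hbv hu
  have hgrowth_v := (hf.add_inner s').add_half_mul_norm_sub_sq_le hg hbv hbu hv
  rw [norm_sub_rev] at hgrowth_u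
  simp only [inner_sub_left, inner_sub_right]
  linarith

lemma StrongConvex.half_mul_norm_sub_sq_le_of_le_add (hf : StrongConvex μ f) (hgp : ProperER g)
    (hg : ConvexER g) {u v : EuclideanSpace ℝ (Fin n)} {r : ℝ}
    (hmin : ∀ w, (f u : EReal) + g u ≤ f w + g w) (hv : (f v : EReal) + g v ≤ f u + g u + r) :
    μ / 2 * ‖v - u‖ ^ 2 ≤ r := by
  obtain ⟨bu, hbu⟩ := hgp.exists_eq_coe (hgp.ne_top_of_isMin hmin)
  have hv_top : g v ≠ ⊤ := by
    intro h
    rw [h, EReal.coe_add_top, hbu, ← EReal.coe_add, ← EReal.coe_add, top_le_iff] at hv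
    exact EReal.coe_ne_top _ hv
  obtain ⟨bv, hbv⟩ := hgp.exists_eq_coe hv_top
  have := hf.add_half_mul_norm_sub_sq_le hg hbu hbv hmin
  rw [hbu, hbv] at hv
  norm_cast at hv
  linarith

end Minimizers

lemma inner_mulE_transpose {m n : ℕ} (B : Matrix (Fin m) (Fin n) ℝ)
    (p : EuclideanSpace ℝ (Fin m)) (q : EuclideanSpace ℝ (Fin n)) :
    ⟪mulE Bᵀ p, q⟫ = ⟪p, mulE B q⟫ := by
  rw [mulE, mulE, ← Matrix.conjTranspose_eq_transpose_of_trivial,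
    Matrix.toEuclideanLin_conjTranspose_eq_adjoint]
  exact LinearMap.adjoint_inner_left _ _ _

lemma sigmaMax_nonneg {m n : ℕ} (B : Matrix (Fin m) (Fin n) ℝ) : 0 ≤ sigmaMax B :=
  norm_nonneg _

lemma norm_mulE_le {m n : ℕ} (B : Matrix (Fin m) (Fin n) ℝ) (x : EuclideanSpace ℝ (Fin n)) :
    ‖mulE B x‖ ≤ sigmaMax B * ‖x‖ :=
  (LinearMap.toContinuousLinearMap (Matrix.toEuclideanLin B)).le_opNorm x

lemma norm_argmin_sub_argmin_le {dx dy : ℕ} {μ : ℝ} (hμ : 0 < μ) {f : EuclideanSpace ℝ (Fin dx) → ℝ}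
    (hf : StrongConvex μ f) {g : EuclideanSpace ℝ (Fin dx) → EReal} (hgp : ProperER g)
    (hg : ConvexER g) {B : Matrix (Fin dy) (Fin dx) ℝ}
    {xstar : EuclideanSpace ℝ (Fin dy) → EuclideanSpace ℝ (Fin dx)}
    (hxstar : ∀ y x, (f (xstar y) : EReal) + g (xstar y) + ((⟪mulE Bᵀ y, xstar y⟫ : ℝ) : EReal)
        ≤ (f x : EReal) + g x + ((⟪mulE Bᵀ y, x⟫ : ℝ) : EReal))
    (w w' : EuclideanSpace ℝ (Fin dy)) :
    ‖xstar w - xstar w'‖ ≤ sigmaMax B / μ * ‖w - w'‖ := by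
  have hmin : ∀ y x, ((f (xstar y) + ⟪mulE Bᵀ y, xstar y⟫ : ℝ) : EReal) + g (xstar y)
      ≤ ((f x + ⟪mulE Bᵀ y, x⟫ : ℝ) : EReal) + g x := by
    intro y x
    simpa only [EReal.coe_add, add_right_comm] using hxstar y x
  have hmono := hf.mul_norm_sub_sq_le_inner_of_isMin hgp hg (hmin w) (hmin w')
  have hbound : ⟪mulE Bᵀ w' - mulE Bᵀ w, xstar w - xstar w'⟫
      ≤ sigmaMax B * ‖w - w'‖ * ‖xstar w - xstar w'‖ := by
    have hsub : mulE Bᵀ w' - mulE Bᵀ w = mulE Bᵀ (w' - w) := by simp only [mulE, map_sub]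
    rw [hsub, inner_mulE_transpose, norm_sub_rev w]
    calc _ ≤ ‖w' - w‖ * ‖mulE B (xstar w - xstar w')‖ := real_inner_le_norm _ _
      _ ≤ ‖w' - w‖ * (sigmaMax B * ‖xstar w - xstar w'‖) := by gcongr; exact norm_mulE_le _ _
      _ = _ := by ring
  rw [div_mul_eq_mul_div, le_div_iff₀ hμ]
  rcases (norm_nonneg (xstar w - xstar w')).eq_or_lt with h0 | hpos
  · rw [← h0, zero_mul]
    exact mul_nonneg (sigmaMax_nonneg B) (norm_nonneg _)
  · nlinarith

lemma Real.rpow_neg_natCast_div_two {ρ : ℝ} (hρ : 0 ≤ ρ) (i : ℕ) :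
    ρ ^ (-(i : ℝ) / 2) = (√ρ)⁻¹ ^ i := by
  rw [show -(i : ℝ) / 2 = 1 / 2 * -(i : ℝ) by ring, Real.rpow_mul hρ, ← Real.sqrt_eq_rpow,
    Real.rpow_neg (Real.sqrt_nonneg ρ), Real.rpow_natCast, inv_pow]

lemma abs_eq_sqrt_pow_mul_of_sq_eq {θ : ℝ} (hθ : 0 ≤ θ) {ε : ℕ → ℝ} (hε1 : 0 ≤ ε 1)
    (hrec : ∀ k, 1 ≤ k → ε (k + 1) ^ 2 = θ * ε k ^ 2) {i : ℕ} (hi : 1 ≤ i) :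
    |ε i| = √θ ^ (i - 1) * ε 1 := by
  induction i, hi using Nat.le_induction with
  | base => simp [abs_of_nonneg hε1]
  | succ k hk ih =>
    rw [← Real.sqrt_sq_eq_abs, hrec k hk, Real.sqrt_mul hθ, Real.sqrt_sq_eq_abs, ih,
      show k + 1 - 1 = k - 1 + 1 by omega, pow_succ]
    ring

lemma sq_succ_eq_pow_mul_sq {θ : ℝ} {ε : ℕ → ℝ}
    (hrec : ∀ k, 1 ≤ k → ε (k + 1) ^ 2 = θ * ε k ^ 2) (k : ℕ) :
    ε (k + 1) ^ 2 = θ ^ k * ε 1 ^ 2 := by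
  induction k with
  | zero => simp
  | succ k ih => rw [hrec (k + 1) (by omega), ih, pow_succ]; ring

lemma pow_mul_one_add_sum_Icc {a b : ℝ} (ha : a ≠ 0) (k : ℕ) :
    a ^ k * (1 + ∑ i ∈ Icc 1 k, a⁻¹ ^ i * b ^ (i - 1) * (b - a)) = b ^ k := by
  induction k with
  | zero => simp
  | succ k ih =>
    have hcancel : a ^ (k + 1) * a⁻¹ ^ (k + 1) = 1 := by rw [← mul_pow, mul_inv_cancel₀ ha, one_pow]
    rw [sum_Icc_succ_top (by omega), Nat.add_sub_cancel]
    linear_combination a * ih + b ^ k * (b - a) * hcancel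

lemma sqrt_pow_mul_abs_le_of_geometric_errors {ρ θ μ D : ℝ} (hρ : 0 < ρ) (hρθ : ρ ≤ θ)
    (hμ : 0 < μ) {ε : ℕ → ℝ} (hε1 : ε 1 = (√θ - √ρ) * √(μ * D))
    (hrec : ∀ k, 1 ≤ k → ε (k + 1) ^ 2 = θ * ε k ^ 2) (k : ℕ) :
    √ρ ^ k * |√(2 * D) + √(2 / μ) * ∑ i ∈ Icc 1 k, ρ ^ (-(i : ℝ) / 2) * ε i|
      ≤ √(2 * D) * √θ ^ k := by
  set a := √ρ
  set b := √θ
  have ha : 0 < a := Real.sqrt_pos.2 hρ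
  have hab : a ≤ b := Real.sqrt_le_sqrt hρθ
  have hε1_nonneg : 0 ≤ ε 1 := hε1 ▸ mul_nonneg (sub_nonneg.2 hab) (Real.sqrt_nonneg _)
  have hscale : √(2 / μ) * ε 1 = √(2 * D) * (b - a) := by
    rw [hε1, mul_left_comm, ← Real.sqrt_mul (by positivity), div_mul_eq_mul_div,
      mul_div_assoc, mul_div_cancel_left₀ _ hμ.ne']
    ring
  have hterm : ∀ i ∈ Icc 1 k, √(2 / μ) * |ρ ^ (-(i : ℝ) / 2) * ε i|
      = √(2 * D) * (a⁻¹ ^ i * b ^ (i - 1) * (b - a)) := by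
    intro i hi
    rw [abs_mul, Real.rpow_neg_natCast_div_two hρ.le, abs_of_nonneg (by positivity),
      abs_eq_sqrt_pow_mul_of_sq_eq (hρ.le.trans hρθ) hε1_nonneg hrec (mem_Icc.1 hi).1]
    linear_combination a⁻¹ ^ i * b ^ (i - 1) * hscale
  calc a ^ k * |√(2 * D) + √(2 / μ) * ∑ i ∈ Icc 1 k, ρ ^ (-(i : ℝ) / 2) * ε i|
      ≤ a ^ k * (√(2 * D) + √(2 / μ) * ∑ i ∈ Icc 1 k, |ρ ^ (-(i : ℝ) / 2) * ε i|) := by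
        gcongr
        refine (abs_add_le _ _).trans ?_
        rw [abs_of_nonneg (Real.sqrt_nonneg _), abs_mul, abs_of_nonneg (Real.sqrt_nonneg _)]
        gcongr
        exact abs_sum_le_sum_abs _ _
    _ = √(2 * D) * (a ^ k * (1 + ∑ i ∈ Icc 1 k, a⁻¹ ^ i * b ^ (i - 1) * (b - a))) := by
        rw [mul_sum, sum_congr rfl hterm, ← mul_sum]
        ring
    _ = √(2 * D) * b ^ k := by rw [pow_mul_one_add_sum_Icc ha.ne']

lemma pow_mul_sq_le_of_geometric_errors {ρ θ μ D : ℝ} (hρ : 0 ≤ ρ) (hρθ : ρ ≤ θ) (hμ : 0 < μ)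
    (hD : 0 ≤ D) {ε : ℕ → ℝ} (hε1 : ε 1 = (√θ - √ρ) * √(μ * D))
    (hrec : ∀ k, 1 ≤ k → ε (k + 1) ^ 2 = θ * ε k ^ 2) (k : ℕ) :
    ρ ^ k * (√(2 * D) + √(2 / μ) * ∑ i ∈ Icc 1 k, ρ ^ (-(i : ℝ) / 2) * ε i) ^ 2
      ≤ 2 * D * θ ^ k := by
  have hθ : 0 ≤ θ := hρ.trans hρθ
  rcases hρ.eq_or_lt with rfl | hρpos
  · rcases k with _ | k
    · rw [Icc_eq_empty (by omega), sum_empty, mul_zero, add_zero, Real.sq_sqrt (by positivity)]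
      simp
    · rw [zero_pow k.succ_ne_zero, zero_mul]
      positivity
  calc ρ ^ k * (√(2 * D) + √(2 / μ) * ∑ i ∈ Icc 1 k, ρ ^ (-(i : ℝ) / 2) * ε i) ^ 2
      = (√ρ ^ k * |√(2 * D) + √(2 / μ) * ∑ i ∈ Icc 1 k, ρ ^ (-(i : ℝ) / 2) * ε i|) ^ 2 := by
        rw [mul_pow, sq_abs, ← pow_mul, mul_comm k 2, pow_mul, Real.sq_sqrt hρ]
    _ ≤ (√(2 * D) * √θ ^ k) ^ 2 := pow_le_pow_left₀ (by positivity)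
        (sqrt_pow_mul_abs_le_of_geometric_errors hρpos hρθ hμ hε1 hrec k) 2
    _ = 2 * D * θ ^ k := by
        rw [mul_pow, Real.sq_sqrt (by positivity), ← pow_mul, mul_comm k 2, pow_mul,
          Real.sq_sqrt hθ]

lemma norm_le_sqrt_mul_sqrt_pow {E : Type*} [SeminormedAddCommGroup E] {μ D θ : ℝ} (hμ : 0 < μ)
    (hD : 0 ≤ D) (hθ : 0 ≤ θ) {v : E} {j : ℕ} (h : μ / 2 * ‖v‖ ^ 2 ≤ 2 * D * θ ^ j) :
    ‖v‖ ≤ √(4 * D / μ) * √θ ^ j := by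
  rw [← pow_le_pow_iff_left₀ (norm_nonneg v) (by positivity) two_ne_zero, mul_pow,
    Real.sq_sqrt (by positivity), ← pow_mul, mul_comm j 2, pow_mul, Real.sq_sqrt hθ,
    div_mul_eq_mul_div, le_div_iff₀ hμ]
  linarith

lemma StrongConvex.norm_sub_le_of_inexact_apg_bound {n : ℕ} {μ D ρ θ : ℝ}
    {φ : EuclideanSpace ℝ (Fin n) → ℝ} (hφ : StrongConvex μ φ)
    {g : EuclideanSpace ℝ (Fin n) → EReal} (hgp : ProperER g) (hg : ConvexER g) (hμ : 0 < μ)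
    (hD : 0 ≤ D) (hρ : 0 ≤ ρ) (hρθ : ρ ≤ θ) {ys : EuclideanSpace ℝ (Fin n)}
    {y : ℕ → EuclideanSpace ℝ (Fin n)} {ε : ℕ → ℝ} (hε1 : ε 1 = (√θ - √ρ) * √(μ * D))
    (hrec : ∀ k, 1 ≤ k → ε (k + 1) ^ 2 = θ * ε k ^ 2)
    (hmin : ∀ v, (φ ys : EReal) + g ys ≤ φ v + g v)
    (hy0 : (φ (y 0) : EReal) + g (y 0) ≤ φ ys + g ys + D)
    (hapg : ∀ k, 1 ≤ k → (φ (y k) : EReal) + g (y k) ≤ φ ys + g ys +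
      ((ρ ^ k * (√(2 * D) + √(2 / μ) * ∑ i ∈ Icc 1 k, ρ ^ (-(i : ℝ) / 2) * ε i) ^ 2 : ℝ) : EReal))
    (j : ℕ) : ‖y j - ys‖ ≤ √(4 * D / μ) * √θ ^ j := by
  refine norm_le_sqrt_mul_sqrt_pow hμ hD (hρ.trans hρθ) ?_
  rcases j.eq_zero_or_pos with rfl | hj
  · have := hφ.half_mul_norm_sub_sq_le_of_le_add hgp hg hmin hy0
    rw [pow_zero, mul_one]
    linarith
  · exact (hφ.half_mul_norm_sub_sq_le_of_le_add hgp hg hmin (hapg j hj)).trans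
      (pow_mul_sq_le_of_geometric_errors hρ hρθ hμ hD hε1 hrec j)

lemma norm_add_smul_sub_sub_le {E : Type*} [SeminormedAddCommGroup E] [NormedSpace ℝ E] {β : ℝ}
    (hβ : 0 ≤ β) (p q y : E) : ‖p + β • (p - q) - y‖ ≤ (1 + β) * ‖p - y‖ + β * ‖q - y‖ := by
  calc ‖p + β • (p - q) - y‖ = ‖(1 + β) • (p - y) - β • (q - y)‖ := by congr 1; module
    _ ≤ (1 + β) * ‖p - y‖ + β * ‖q - y‖ := by
      refine (norm_sub_le _ _).trans ?_
      rw [norm_smul, norm_smul, Real.norm_of_nonneg (by linarith), Real.norm_of_nonneg hβ]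

lemma norm_extrapolation_sub_le {E : Type*} [SeminormedAddCommGroup E] [NormedSpace ℝ E]
    {y : ℕ → E} {ys : E} {R b β e : ℝ} (hR : 0 ≤ R) (hb : 0 ≤ b) (hβ : 0 ≤ β)
    (hbe : (1 + β) * b + β ≤ b * e) (hy : ∀ j, ‖y j - ys‖ ≤ R * b ^ j) {k : ℕ} (hk : 1 ≤ k) :
    ‖y k + β • (y k - y (k - 1)) - ys‖ ≤ R * b ^ k * e := by
  obtain ⟨j, rfl⟩ : ∃ j, k = j + 1 := ⟨k - 1, by omega⟩
  rw [Nat.add_sub_cancel]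
  calc _ ≤ (1 + β) * ‖y (j + 1) - ys‖ + β * ‖y j - ys‖ := norm_add_smul_sub_sub_le hβ _ _ _
    _ ≤ (1 + β) * (R * b ^ (j + 1)) + β * (R * b ^ j) := by gcongr <;> exact hy _
    _ = R * b ^ j * ((1 + β) * b + β) := by ring
    _ ≤ R * b ^ j * (b * e) := by gcongr
    _ = R * b ^ (j + 1) * e := by ring

lemma momentum_factor_le {s a b : ℝ} (hs : 1 ≤ s) (ha : 0 ≤ a) (hab : a ≤ b)
    (ha2 : a ^ 2 = 1 - 1 / s) :
    (1 + (s - 1) / (s + 1)) * b + (s - 1) / (s + 1) ≤ b * (s * (2 + a) / (s + 1)) := by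
  have hs1 : 0 < s + 1 := by linarith
  have hsa : s * a ^ 2 = s - 1 := by
    rw [ha2]
    field_simp
  have hlhs : (1 + (s - 1) / (s + 1)) * b + (s - 1) / (s + 1)
      = (2 * s * b + (s - 1)) / (s + 1) := by
    field_simp
    ring
  rw [hlhs, mul_div_assoc', div_le_div_iff_of_pos_right hs1]
  nlinarith [mul_nonneg (mul_nonneg (by linarith : 0 ≤ s) ha) (sub_nonneg.2 hab)]

lemma one_sub_one_div_nonneg_and_lt {s c : ℝ} (hs : 1 ≤ s) (hc : 1 < c) :
    0 ≤ 1 - 1 / s ∧ 1 - 1 / s < 1 - 1 / (c * s) := by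
  have hs0 : 0 < s := by linarith
  refine ⟨by rw [sub_nonneg, div_le_one hs0]; exact hs, ?_⟩
  have : 1 / (c * s) < 1 / s := one_div_lt_one_div_of_lt hs0 (by nlinarith)
  linarith

theorem idapg_quantitative_decay_general {dx dy : ℕ} (μx μφ : ℝ)
    (hμx : 0 < μx) (hμφ : 0 < μφ)
    (f1 : EuclideanSpace ℝ (Fin dx) → ℝ)
    (hf1sc : StrongConvex μx f1)
    (f2 : EuclideanSpace ℝ (Fin dx) → EReal)
    (hf2prop : ProperER f2) (hf2conv : ConvexER f2)
    (g2 : EuclideanSpace ℝ (Fin dy) → EReal)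
    (hg2prop : ProperER g2) (hg2conv : ConvexER g2)
    (B : Matrix (Fin dy) (Fin dx) ℝ) (hB : 0 < sigmaMax B)
    (xstar : EuclideanSpace ℝ (Fin dy) → EuclideanSpace ℝ (Fin dx))
    (hxstar : ∀ y x, (f1 (xstar y) : EReal) + f2 (xstar y) + ((⟪mulE Bᵀ y, xstar y⟫ : ℝ) : EReal)
        ≤ (f1 x : EReal) + f2 x + ((⟪mulE Bᵀ y, x⟫ : ℝ) : EReal))
    -- the dual function φ, its gradient and strong convexity
    (φ : EuclideanSpace ℝ (Fin dy) → ℝ)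
    (hφsc : StrongConvex μφ φ)
    -- the constants
    (κφ ρ c θ : ℝ)
    (hκφ1 : 1 ≤ κφ)
    (hρ : ρ = 1 - 1 / Real.sqrt κφ)
    (hc : 1 < c)
    (hθ : θ = 1 - 1 / (c * Real.sqrt κφ))
    -- Φ = φ + g2 with minimizer y*, and the saddle point (x*, y*) with x* = x*(y*)
    (Φ : EuclideanSpace ℝ (Fin dy) → EReal)
    (hΦ : ∀ y, Φ y = (φ y : EReal) + g2 y)
    (xs : EuclideanSpace ℝ (Fin dx)) (ys : EuclideanSpace ℝ (Fin dy))
    (hysmin : ∀ y, Φ ys ≤ Φ y)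
    (hxs : xs = xstar ys)
    -- the iterates
    (x : ℕ → EuclideanSpace ℝ (Fin dx))
    (y z : ℕ → EuclideanSpace ℝ (Fin dy))
    -- the (positive, finite) initial dual gap
    (D0 : ℝ) (hD0 : Φ (y 0) = Φ ys + (D0 : EReal)) (hD0pos : 0 < D0)
    -- the error tolerances
    (ε : ℕ → ℝ)
    (hε1 : ε 1 = (Real.sqrt θ - Real.sqrt ρ) * Real.sqrt (μφ * (D0 : ℝ)))
    (hεrec : ∀ k, 1 ≤ k → ε (k + 1) ^ 2 = θ * ε k ^ 2)
    (herr : ∀ k, ‖x (k + 1) - xstar (z k)‖ ^ 2 ≤ ε (k + 1) ^ 2 / sigmaMax B ^ 2)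
    (hz : ∀ k, 1 ≤ k →
      z k = y k + ((Real.sqrt κφ - 1) / (Real.sqrt κφ + 1)) • (y k - y (k - 1)))
    -- the inexact-APG bound
    (hapg : ∀ k : ℕ, 1 ≤ k →
      Φ (y k) ≤ Φ ys + ((ρ ^ k * (Real.sqrt (2 * D0) + Real.sqrt (2 / μφ) *
        ∑ i ∈ Finset.Icc 1 k, ρ ^ (-(i : ℝ) / 2) * ε i) ^ 2 : ℝ) : EReal))
    -- the constants C₁, C₂, C₃
    (C1 C2 C3 : ℝ)
    (hC1 : C1 = 2 * sigmaMax B ^ 2 / (μx ^ 2 * μφ) *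
      (Real.sqrt κφ * (2 + Real.sqrt ρ) / (Real.sqrt κφ + 1)) ^ 2)
    (hC2 : C2 = 8 * C1 / (μφ * (Real.sqrt θ - Real.sqrt ρ) ^ 2))
    (hC3 : C3 = 2 * (C2 + 1 / sigmaMax B ^ 2)) :
    ∀ k : ℕ, 1 ≤ k →
      ‖xstar (z k) - xs‖ ^ 2 < C2 * ε 1 ^ 2 * θ ^ k ∧
      ‖x (k + 1) - xs‖ ^ 2 < C3 * ε 1 ^ 2 * θ ^ k := by
  intro k hk
  have hs : 1 ≤ √κφ := Real.one_le_sqrt.2 hκφ1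
  obtain ⟨hρ0, hρθ⟩ : 0 ≤ ρ ∧ ρ < θ := hρ ▸ hθ ▸ one_sub_one_div_nonneg_and_lt hs hc
  have hθ0 : 0 < θ := hρ0.trans_lt hρθ
  simp only [hΦ] at hysmin hD0 hapg
  set R := √(4 * D0 / μφ)
  set E := √κφ * (2 + √ρ) / (√κφ + 1)
  have hy : ∀ j, ‖y j - ys‖ ≤ R * √θ ^ j := hφsc.norm_sub_le_of_inexact_apg_bound hg2prop
    hg2conv hμφ hD0pos.le hρ0 hρθ.le hε1 hεrec hysmin hD0.le hapg
  have hzk : ‖z k - ys‖ ≤ R * √θ ^ k * E := hz k hk ▸ norm_extrapolation_sub_le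
    (Real.sqrt_nonneg _) (Real.sqrt_nonneg _) (div_nonneg (by linarith) (by linarith))
    (momentum_factor_le hs (Real.sqrt_nonneg _) (Real.sqrt_le_sqrt hρθ.le)
      (hρ ▸ Real.sq_sqrt hρ0)) hy hk
  have hxz : ‖xstar (z k) - xs‖ ≤ sigmaMax B / μx * ‖z k - ys‖ :=
    hxs ▸ norm_argmin_sub_argmin_le hμx hf1sc hf2prop hf2conv hxstar (z k) ys
  have hC2ε : C2 * ε 1 ^ 2 = 4 * (sigmaMax B / μx * R * E) ^ 2 := by
    have hgap : √θ - √ρ ≠ 0 := sub_ne_zero.2 (Real.sqrt_lt_sqrt hρ0 hρθ).ne'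
    rw [hC2, hC1, hε1, mul_pow, mul_pow, mul_pow, Real.sq_sqrt (by positivity),
      Real.sq_sqrt (by positivity)]
    field_simp
    ring
  have hθk : (√θ ^ k) ^ 2 = θ ^ k := by rw [← pow_mul, mul_comm, pow_mul, Real.sq_sqrt hθ0.le]
  have hx1 : ‖xstar (z k) - xs‖ ^ 2 ≤ C2 * ε 1 ^ 2 * θ ^ k / 4 := by
    calc ‖xstar (z k) - xs‖ ^ 2 ≤ (sigmaMax B / μx * (R * √θ ^ k * E)) ^ 2 := by
          gcongr
          exact hxz.trans (by gcongr)
      _ = C2 * ε 1 ^ 2 * θ ^ k / 4 := by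
          linear_combination (sigmaMax B / μx * R * E) ^ 2 * hθk - θ ^ k / 4 * hC2ε
  have hpos : 0 < C2 * ε 1 ^ 2 * θ ^ k := by
    rw [hC2ε]
    positivity
  have hx2 : ‖x (k + 1) - xstar (z k)‖ ^ 2 ≤ θ ^ k * ε 1 ^ 2 / sigmaMax B ^ 2 :=
    sq_succ_eq_pow_mul_sq hεrec k ▸ herr k
  refine ⟨by linarith, ?_⟩
  calc ‖x (k + 1) - xs‖ ^ 2 ≤ (‖x (k + 1) - xstar (z k)‖ + ‖xstar (z k) - xs‖) ^ 2 := by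
        gcongr
        exact norm_sub_le_norm_sub_add_norm_sub _ _ _
    _ ≤ 2 * (‖x (k + 1) - xstar (z k)‖ ^ 2 + ‖xstar (z k) - xs‖ ^ 2) := add_sq_le
    _ < C3 * ε 1 ^ 2 * θ ^ k := by
        rw [hC3, show 2 * (C2 + 1 / sigmaMax B ^ 2) * ε 1 ^ 2 * θ ^ k
          = 2 * (C2 * ε 1 ^ 2 * θ ^ k) + 2 * (θ ^ k * ε 1 ^ 2 / sigmaMax B ^ 2) by ring]
        linarith

/-- quantitative geometric decay in the proof of Theorem 3. -/
theorem idapg_quantitative_decay {dx dy : ℕ} (μx Lx Ly μφ : ℝ)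
    (hμx : 0 < μx) (hLx : μx ≤ Lx) (hLy : 0 ≤ Ly) (hμφ : 0 < μφ)
    (f1 : EuclideanSpace ℝ (Fin dx) → ℝ)
    (f1' : EuclideanSpace ℝ (Fin dx) → EuclideanSpace ℝ (Fin dx))
    (hf1grad : ∀ x, HasGradientAt f1 (f1' x) x)
    (hf1sc : StrongConvex μx f1)
    (hf1sm : ∀ x x', ‖f1' x - f1' x'‖ ≤ Lx * ‖x - x'‖)
    (g1 : EuclideanSpace ℝ (Fin dy) → ℝ)
    (g1' : EuclideanSpace ℝ (Fin dy) → EuclideanSpace ℝ (Fin dy))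
    (hg1grad : ∀ y, HasGradientAt g1 (g1' y) y)
    (hg1conv : ConvexOn ℝ Set.univ g1)
    (hg1sm : ∀ y y', ‖g1' y - g1' y'‖ ≤ Ly * ‖y - y'‖)
    (f2 : EuclideanSpace ℝ (Fin dx) → EReal)
    (hf2prop : ProperER f2) (hf2conv : ConvexER f2) (hf2lsc : LowerSemicontinuous f2)
    (g2 : EuclideanSpace ℝ (Fin dy) → EReal)
    (hg2prop : ProperER g2) (hg2conv : ConvexER g2) (hg2lsc : LowerSemicontinuous g2)
    (B : Matrix (Fin dy) (Fin dx) ℝ) (hB : 0 < sigmaMax B)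
    (xstar : EuclideanSpace ℝ (Fin dy) → EuclideanSpace ℝ (Fin dx))
    (hxstar : ∀ y x, (f1 (xstar y) : EReal) + f2 (xstar y) + ((⟪mulE Bᵀ y, xstar y⟫ : ℝ) : EReal)
        ≤ (f1 x : EReal) + f2 x + ((⟪mulE Bᵀ y, x⟫ : ℝ) : EReal))
    -- the dual function φ, its gradient and strong convexity
    (φ : EuclideanSpace ℝ (Fin dy) → ℝ)
    (hφgrad : ∀ y, HasGradientAt φ (g1' y - mulE B (xstar y)) y)
    (hφsc : StrongConvex μφ φ)
    -- the constants
    (κφ ρ c θ : ℝ)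
    (hκφ : κφ = (sigmaMax B ^ 2 / μx + Ly) / μφ) (hκφ1 : 1 ≤ κφ)
    (hρ : ρ = 1 - 1 / Real.sqrt κφ)
    (hc : 1 < c)
    (hθ : θ = 1 - 1 / (c * Real.sqrt κφ))
    -- Φ = φ + g2 with minimizer y*, and the saddle point (x*, y*) with x* = x*(y*)
    (Φ : EuclideanSpace ℝ (Fin dy) → EReal)
    (hΦ : ∀ y, Φ y = (φ y : EReal) + g2 y)
    (xs : EuclideanSpace ℝ (Fin dx)) (ys : EuclideanSpace ℝ (Fin dy))
    (hysmin : ∀ y, Φ ys ≤ Φ y)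
    (hxs : xs = xstar ys)
    -- the iterates
    (x : ℕ → EuclideanSpace ℝ (Fin dx))
    (y z : ℕ → EuclideanSpace ℝ (Fin dy))
    -- the (positive, finite) initial dual gap
    (D0 : ℝ) (hD0 : Φ (y 0) = Φ ys + (D0 : EReal)) (hD0pos : 0 < D0)
    -- the error tolerances
    (ε : ℕ → ℝ)
    (hε1 : ε 1 = (Real.sqrt θ - Real.sqrt ρ) * Real.sqrt (μφ * (D0 : ℝ)))
    (hεrec : ∀ k, 1 ≤ k → ε (k + 1) ^ 2 = θ * ε k ^ 2)
    (herr : ∀ k, ‖x (k + 1) - xstar (z k)‖ ^ 2 ≤ ε (k + 1) ^ 2 / sigmaMax B ^ 2)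
    (hz : ∀ k, 1 ≤ k →
      z k = y k + ((Real.sqrt κφ - 1) / (Real.sqrt κφ + 1)) • (y k - y (k - 1)))
    -- the inexact-APG bound
    (hapg : ∀ k : ℕ, 1 ≤ k →
      Φ (y k) ≤ Φ ys + ((ρ ^ k * (Real.sqrt (2 * D0) + Real.sqrt (2 / μφ) *
        ∑ i ∈ Finset.Icc 1 k, ρ ^ (-(i : ℝ) / 2) * ε i) ^ 2 : ℝ) : EReal))
    -- the constants C₁, C₂, C₃
    (C1 C2 C3 : ℝ)
    (hC1 : C1 = 2 * sigmaMax B ^ 2 / (μx ^ 2 * μφ) *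
      (Real.sqrt κφ * (2 + Real.sqrt ρ) / (Real.sqrt κφ + 1)) ^ 2)
    (hC2 : C2 = 8 * C1 / (μφ * (Real.sqrt θ - Real.sqrt ρ) ^ 2))
    (hC3 : C3 = 2 * (C2 + 1 / sigmaMax B ^ 2)) :
    ∀ k : ℕ, 1 ≤ k →
      ‖xstar (z k) - xs‖ ^ 2 < C2 * ε 1 ^ 2 * θ ^ k ∧
      ‖x (k + 1) - xs‖ ^ 2 < C3 * ε 1 ^ 2 * θ ^ k :=
  idapg_quantitative_decay_general μx μφ hμx hμφ f1 hf1sc f2 hf2prop hf2conv g2 hg2prop hg2conv B hB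
    xstar hxstar φ hφsc κφ ρ c θ hκφ1 hρ hc hθ Φ hΦ xs ys hysmin hxs x y z D0 hD0 hD0pos ε hε1 hεrec
    herr hz hapg C1 C2 C3 hC1 hC2 hC3
end
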